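/- Let q > 1 be a real number, z1, z2, z3 nonzero complex numbers with z1*z2*z3 = 1, N the 3x3 matrix defined by N(g1) = q*z3*g1 + (q-1)*q*z3*g2 + (q-1)*q^2*z3*g3, N(g2) = q*z2*g2 + (q-1)*q*z2*g3, N(g3) = q*z1*g3, and M the 6x6 L_B matrix with the same parameters. Then both M and N are invertible: det(N) = q^3*z1*z2*z3 = q^3 ≠ 0 and det(M) = -q^3 ≠ 0. -/

import Mathlib

open Matrix

/-- The matrix of the Iwahori-Hecke operator `L_B` on the six-dimensional space of
Iwahori-fixed vectors, in the basis `f1, ..., f6` (columns are images of basis vectors). -/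
def LB (q z1 z2 z3 : ℂ) : Matrix (Fin 6) (Fin 6) ℂ :=
  !![0,       q*z2*z3, 0,           0,             (q-1)*q*z2*z3, 0;
     z1*z3,   0,       (q-1)*z1*z3, 0,             0,             0;
     0,       0,       0,           (q-1)*q*z2*z3, 0,             q*z2*z3;
     0,       0,       0,           0,             z1*z2,         0;
     0,       0,       0,           q*z1*z3,       0,             0;
     0,       0,       z1*z2,       0,             0,             0]

/-- The matrix of the parahoric edge operator `L_E` on the three-dimensional space of
`E`-fixed vectors, in the basis `g1, g2, g3` (columns are images of basis vectors). -/
def LEmat (q z1 z2 z3 : ℂ) : Matrix (Fin 3) (Fin 3) ℂ :=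
  !![q*z3,         0,           0;
     (q-1)*q*z3,   q*z2,        0;
     (q-1)*q^2*z3, (q-1)*q*z2,  q*z1]

/-! `L_E` is lower triangular with diagonal `q z₃, q z₂, q z₁`, and `L_B` is block upper triangular
for the splitting `{f₁, f₂} ∪ {f₃, …, f₆}`; expanding gives `det L_E = q³ z₁z₂z₃` and
`det L_B = -q³ (z₁z₂z₃)⁴`. On the torus `z₁z₂z₃ = 1` these are `±q³`, which vanish only at `q = 0`. -/

theorem det_LEmat (q z1 z2 z3 : ℂ) : (LEmat q z1 z2 z3).det = q ^ 3 * (z1 * z2 * z3) := by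
  simp [LEmat, det_fin_three]
  ring

theorem det_LB (q z1 z2 z3 : ℂ) : (LB q z1 z2 z3).det = -q ^ 3 * (z1 * z2 * z3) ^ 4 := by
  simp [LB, det_succ_row_zero, Fin.sum_univ_succ, Fin.succAbove]
  ring

theorem LB_LE_invertible_general (q : ℝ) (hq : 1 < q) (z1 z2 z3 : ℂ)
    (h : z1 * z2 * z3 = 1) :
    (LEmat (q : ℂ) z1 z2 z3).det = (q : ℂ) ^ 3 ∧
    (LB (q : ℂ) z1 z2 z3).det = -(q : ℂ) ^ 3 ∧
    (LEmat (q : ℂ) z1 z2 z3).det ≠ 0 ∧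
    (LB (q : ℂ) z1 z2 z3).det ≠ 0 ∧
    IsUnit (LEmat (q : ℂ) z1 z2 z3) ∧
    IsUnit (LB (q : ℂ) z1 z2 z3) := by
  have hq3 : (q : ℂ) ^ 3 ≠ 0 := pow_ne_zero 3 (Complex.ofReal_ne_zero.mpr (by linarith))
  have hLE : (LEmat (q : ℂ) z1 z2 z3).det = (q : ℂ) ^ 3 := by rw [det_LEmat, h, mul_one]
  have hLB : (LB (q : ℂ) z1 z2 z3).det = -(q : ℂ) ^ 3 := by rw [det_LB, h, one_pow, mul_one]
  have hLE0 : (LEmat (q : ℂ) z1 z2 z3).det ≠ 0 := hLE ▸ hq3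
  have hLB0 : (LB (q : ℂ) z1 z2 z3).det ≠ 0 := hLB ▸ neg_ne_zero.mpr hq3
  exact ⟨hLE, hLB, hLE0, hLB0, (isUnit_iff_isUnit_det _).mpr hLE0.isUnit,
    (isUnit_iff_isUnit_det _).mpr hLB0.isUnit⟩

theorem LB_LE_invertible (q : ℝ) (hq : 1 < q) (z1 z2 z3 : ℂ)
    (hz1 : z1 ≠ 0) (hz2 : z2 ≠ 0) (hz3 : z3 ≠ 0) (h : z1 * z2 * z3 = 1) :
    (LEmat (q : ℂ) z1 z2 z3).det = (q : ℂ) ^ 3 ∧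
    (LB (q : ℂ) z1 z2 z3).det = -(q : ℂ) ^ 3 ∧
    (LEmat (q : ℂ) z1 z2 z3).det ≠ 0 ∧
    (LB (q : ℂ) z1 z2 z3).det ≠ 0 ∧
    IsUnit (LEmat (q : ℂ) z1 z2 z3) ∧
    IsUnit (LB (q : ℂ) z1 z2 z3) :=
  LB_LE_invertible_general q hq z1 z2 z3 h
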